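/- For every vertex v of G and every i ∈ {1,…,k}, letting s_i denote the (random) number of neighbors u of v with r_u ∈ I_i, one has E[s_i · 1{v ∈ C_i}] ≤ 2·a_{i+1} · Pr[v ∈ C_i]; equivalently, conditioned on v ∈ C_i, the expected number of neighbors of v with rank in I_i is at most 2·a_{i+1}. -/
import Mathlib


open MeasureTheory Real
open scoped ENNReal

/-- `log* x`: the least `n` such that the `n`-fold iterated natural logarithm of `x` is `≤ 1`. -/
noncomputable def logStar (x : ℝ) : ℕ := sInf {n : ℕ | Real.log^[n] x ≤ 1}

/-- Auxiliary sequence: `aRec 0 = 5`, `aRec (n+1) = exp (aRec n - 3)`. -/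
noncomputable def aRec : ℕ → ℝ
  | 0 => 5
  | n + 1 => Real.exp (aRec n - 3)

/-- Paper-indexed sequence `a_i`: `aP 1 = 5` and `aP (i+1) = exp (aP i - 3)` for `i ≥ 1`. -/
noncomputable def aP (i : ℕ) : ℝ := aRec (i - 1)

/-- `b_i = a_i / Δ`. -/
noncomputable def bP (Δ i : ℕ) : ℝ := aP i / Δ

/-- `k = ⌊(log* Δ) / 10⌋`. -/
noncomputable def kP (Δ : ℕ) : ℕ := logStar Δ / 10

/-- `v ∈ C`: `r v ∈ I_i = (b_i, b_{i+1}]` for some `i ∈ {1,…,k}` and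
`r u ∈ J_i = (b_i, 1]` for every neighbor `u` of `v`. -/
def isCand {V : Type*} (G : SimpleGraph V) (Δ : ℕ) (r : V → ℝ) (v : V) : Prop :=
  ∃ i ∈ Finset.Icc 1 (kP Δ), r v ∈ Set.Ioc (bP Δ i) (bP Δ (i + 1)) ∧
    ∀ u, G.Adj v u → r u ∈ Set.Ioc (bP Δ i) 1

/-- `v ∈ C_i`: `v` is a candidate with rank in `I_i`. -/
def isCandAt {V : Type*} (G : SimpleGraph V) (Δ : ℕ) (r : V → ℝ) (i : ℕ) (v : V) : Prop :=
  isCand G Δ r v ∧ r v ∈ Set.Ioc (bP Δ i) (bP Δ (i + 1))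

/-- `v ∈ 𝓘`: `v` is a candidate and no neighbor of `v` is a candidate. -/
def inIS {V : Type*} (G : SimpleGraph V) (Δ : ℕ) (r : V → ℝ) (v : V) : Prop :=
  isCand G Δ r v ∧ ∀ u, G.Adj v u → ¬ isCand G Δ r u

/-- The ranks are independent and uniform on `[0,1]`: product Lebesgue measure on `[0,1]^V`. -/
noncomputable def rankMeasure (V : Type*) [Fintype V] : Measure (V → ℝ) :=
  Measure.pi fun _ => (volume : Measure ℝ).restrict (Set.Icc 0 1)


lemma seven_le_exp_two : (7:ℝ) ≤ Real.exp 2 := by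
  rw [show (2:ℝ) = 1 + 1 by norm_num, Real.exp_add]
  nlinarith [Real.exp_one_gt_d9]

lemma aRec_ge_five : ∀ n, (5:ℝ) ≤ aRec n := by
  intro n
  induction n with
  | zero => norm_num [aRec]
  | succ n ih =>
    have h2 : (2:ℝ) ≤ aRec n - 3 := by linarith
    calc (5:ℝ) ≤ exp 2 := by linarith [seven_le_exp_two]
      _ ≤ exp (aRec n - 3) := Real.exp_le_exp.mpr h2
      _ = aRec (n+1) := rfl

lemma aRec_lt_succ (n : ℕ) : aRec n < aRec (n + 1) := by
  have h5 := aRec_ge_five n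
  have h1 : aRec n - 4 ≤ exp (aRec n - 5) := by
    have := Real.add_one_le_exp (aRec n - 5); linarith
  have h3 : aRec (n+1) = exp (aRec n - 5) * exp 2 := by
    show exp (aRec n - 3) = _
    rw [← Real.exp_add]; ring_nf
  nlinarith [Real.exp_pos (aRec n - 5), seven_le_exp_two]

lemma aRec_strictMono : StrictMono aRec := strictMono_nat_of_lt_succ aRec_lt_succ

lemma expIter_ge_one (n : ℕ) : (1:ℝ) ≤ Real.exp^[n] 1 := by
  induction n with
  | zero => simp
  | succ n ih =>
    rw [Function.iterate_succ_apply']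
    exact le_trans ih (by nlinarith [Real.add_one_le_exp (Real.exp^[n] 1)])

lemma aRec_le_expIter (n : ℕ) : aRec n ≤ Real.exp^[n+2] 1 := by
  induction n with
  | zero =>
    show (5:ℝ) ≤ Real.exp^[2] 1
    have : Real.exp^[2] 1 = exp (exp 1) := by
      simp [Function.iterate_succ_apply']
    rw [this]
    have h2 : (2:ℝ) ≤ exp 1 := by nlinarith [Real.exp_one_gt_d9]
    have h3 : exp 2 ≤ exp (exp 1) := Real.exp_le_exp.mpr h2
    linarith [seven_le_exp_two]
  | succ n ih =>
    show exp (aRec n - 3) ≤ Real.exp^[n+3] 1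
    have : Real.exp^[n+3] 1 = exp (Real.exp^[n+2] 1) := Function.iterate_succ_apply' _ _ _
    rw [this]
    exact Real.exp_le_exp.mpr (by linarith)

lemma logStar_gt {x : ℝ} {n : ℕ} (h : n < logStar x) : 1 < Real.log^[n] x := by
  by_contra hc
  push_neg at hc
  have hn : n ∈ {n : ℕ | Real.log^[n] x ≤ 1} := hc
  have h2 := Nat.sInf_le hn
  unfold logStar at h
  omega

lemma iter_exp_lt {n : ℕ} {x : ℝ} (h : ∀ j ≤ n, 1 < Real.log^[j] x) :
    Real.exp^[n] 1 < x := by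
  induction n generalizing x with
  | zero => simpa using h 0 le_rfl
  | succ n ih =>
    have hlog : Real.exp^[n] 1 < Real.log x := by
      apply ih
      intro j hj
      have := h (j+1) (by omega)
      rwa [Function.iterate_succ_apply] at this
    have hx1 : 1 < x := by simpa using h 0 (by omega)
    have : Real.exp^[n+1] 1 = exp (Real.exp^[n] 1) := Function.iterate_succ_apply' _ _ _
    rw [this]
    calc exp (Real.exp^[n] 1) < exp (Real.log x) := Real.exp_lt_exp.mpr hlog
      _ = x := Real.exp_log (by linarith)

lemma two_mul_le_exp {y : ℝ} (hy : 1 ≤ y) : 2 * y ≤ Real.exp y := by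
  have h1 : y ≤ exp (y - 1) := by have := Real.add_one_le_exp (y-1); linarith
  have h2 : exp y = exp (y-1) * exp 1 := by rw [← Real.exp_add]; ring_nf
  nlinarith [Real.exp_one_gt_d9, Real.exp_pos (y-1)]

lemma key_bounds {Δ i : ℕ} (hΔ : 1000 < Δ) (h1 : 1 ≤ i) (h2 : i ≤ kP Δ) :
    2 * aP i < (Δ:ℝ) ∧ aP (i+1) < (Δ:ℝ) := by
  have hall : ∀ j ≤ i + 2, 1 < Real.log^[j] (Δ:ℝ) := by
    intro j hj
    apply logStar_gt
    have h10 : 10 * kP Δ ≤ logStar (Δ:ℝ) := by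
      have := Nat.div_mul_le_self (logStar (Δ:ℝ)) 10
      unfold kP
      omega
    omega
  have hexp : Real.exp^[i+2] 1 < (Δ:ℝ) := iter_exp_lt hall
  constructor
  · have ha : aP i ≤ Real.exp^[i+1] 1 := by
      have : aP i = aRec (i-1) := rfl
      rw [this]
      have := aRec_le_expIter (i-1)
      have he : i - 1 + 2 = i + 1 := by omega
      rwa [he] at this
    have h2e : 2 * Real.exp^[i+1] 1 ≤ Real.exp^[i+2] 1 := by
      have : Real.exp^[i+2] 1 = exp (Real.exp^[i+1] 1) := Function.iterate_succ_apply' _ _ _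
      rw [this]
      exact two_mul_le_exp (expIter_ge_one _)
    linarith
  · have ha : aP (i+1) ≤ Real.exp^[i+2] 1 := by
      have : aP (i+1) = aRec i := rfl
      rw [this]
      exact aRec_le_expIter i
    linarith

noncomputable def nuU : Measure ℝ := (volume : Measure ℝ).restrict (Set.Icc 0 1)

lemma nuU_Ioc {c d : ℝ} (h0 : 0 ≤ c) (h1 : d ≤ 1) :
    nuU (Set.Ioc c d) = ENNReal.ofReal (d - c) := by
  rw [nuU, Measure.restrict_apply measurableSet_Ioc]
  rw [Set.inter_eq_left.mpr]
  · exact Real.volume_Ioc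
  · intro x hx
    exact ⟨le_of_lt (lt_of_le_of_lt h0 hx.1), le_trans hx.2 h1⟩

lemma nuU_univ : nuU Set.univ = 1 := by
  rw [nuU, Measure.restrict_apply MeasurableSet.univ, Set.univ_inter, Real.volume_Icc]
  norm_num

instance : IsProbabilityMeasure nuU := ⟨nuU_univ⟩

lemma pi_prod_insert {V : Type*} [Fintype V] [DecidableEq V]
    (T : V → Set ℝ) (F : Finset V)
    (hout : ∀ w ∉ F, T w = Set.univ) :
    Measure.pi (fun _ : V => nuU) (Set.pi Set.univ T) = ∏ w ∈ F, nuU (T w) := by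
  rw [Measure.pi_pi]
  exact (Finset.prod_subset (Finset.subset_univ F) (by
    intro w _ hw
    rw [hout w hw, nuU_univ])).symm

lemma aP_mono {j i : ℕ} (h1 : 1 ≤ j) (hji : j ≤ i) : aP j ≤ aP i :=
  aRec_strictMono.monotone (by omega)

lemma candAt_iff {V : Type*} (G : SimpleGraph V) {Δ i : ℕ} (hΔ : 0 < Δ)
    (h1 : 1 ≤ i) (h2 : i ≤ kP Δ) (r : V → ℝ) (v : V) :
    isCandAt G Δ r i v ↔ (r v ∈ Set.Ioc (bP Δ i) (bP Δ (i+1)) ∧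
      ∀ u, G.Adj v u → r u ∈ Set.Ioc (bP Δ i) 1) := by
  constructor
  · rintro ⟨⟨j, hj, hrvj, hnbj⟩, hrvi⟩
    obtain ⟨hj1, hj2⟩ := Finset.mem_Icc.mp hj
    have hΔR : (0:ℝ) < Δ := by exact_mod_cast hΔ
    have hij : j = i := by
      by_contra hne
      rcases lt_or_gt_of_ne hne with h | h
      · have hle : bP Δ (j+1) ≤ bP Δ i := by
          unfold bP
          exact div_le_div_of_nonneg_right (aP_mono (by omega) (by omega)) hΔR.le
        exact absurd (hrvj.2.trans hle) (not_le.mpr hrvi.1)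
      · have hle : bP Δ (i+1) ≤ bP Δ j := by
          unfold bP
          exact div_le_div_of_nonneg_right (aP_mono (by omega) (by omega)) hΔR.le
        exact absurd (hrvi.2.trans hle) (not_le.mpr hrvj.1)
    subst hij
    exact ⟨hrvi, hnbj⟩
  · rintro ⟨hrv, hnb⟩
    exact ⟨⟨i, Finset.mem_Icc.mpr ⟨h1, h2⟩, hrv, hnb⟩, hrv⟩

theorem stmt3 {V : Type*} [Fintype V] [DecidableEq V]
    (G : SimpleGraph V) [DecidableRel G.Adj] (Δ : ℕ) (hΔ : 1000 < Δ)
    (hreg : G.IsRegularOfDegree Δ) (htri : G.CliqueFree 3)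
    (v : V) (i : ℕ) (hi : i ∈ Finset.Icc 1 (kP Δ)) :
    ∫⁻ r in {r : V → ℝ | isCandAt G Δ r i v},
        (((G.neighborFinset v).filter fun u =>
            bP Δ i < r u ∧ r u ≤ bP Δ (i + 1)).card : ℝ≥0∞) ∂(rankMeasure V) ≤
      ENNReal.ofReal (2 * aP (i + 1)) * rankMeasure V {r | isCandAt G Δ r i v} := by
  classical
  obtain ⟨h1i, h2i⟩ := Finset.mem_Icc.mp hi
  have hΔ0 : 0 < Δ := by omega
  have hΔR : (0:ℝ) < Δ := by exact_mod_cast hΔ0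
  obtain ⟨hkey1, hkey2⟩ := key_bounds hΔ h1i h2i
  set b1 := bP Δ i with hb1def
  set b2 := bP Δ (i+1) with hb2def
  set a := aP (i+1) with hadef
  have ha5 : (5:ℝ) ≤ a := aRec_ge_five _
  have hai5 : (5:ℝ) ≤ aP i := aRec_ge_five _
  have hb1pos : 0 < b1 := div_pos (by linarith) hΔR
  have hb1half : b1 ≤ 1/2 := by
    rw [hb1def, bP, div_le_iff₀ hΔR]; linarith
  have hb12 : b1 < b2 := by
    rw [hb1def, hb2def, bP, bP, div_lt_div_iff_of_pos_right] <;>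
      [skip; exact hΔR]
    exact aRec_strictMono (by omega)
  have hb21 : b2 ≤ 1 := by
    rw [hb2def, bP, div_le_one hΔR]; linarith
  have hb2a : b2 = a / Δ := rfl
  set N := G.neighborFinset v with hNdef
  have hNcard : N.card = Δ := by
    rw [hNdef, SimpleGraph.card_neighborFinset_eq_degree]; exact hreg v
  have hvN : v ∉ N := by
    simp [hNdef]
  set μ : Measure (V → ℝ) := rankMeasure V with hμdef
  have hμpi : μ = Measure.pi (fun _ : V => nuU) := rfl
  set S : V → Set ℝ := fun w =>
    if w = v then Set.Ioc b1 b2 else if w ∈ N then Set.Ioc b1 1 else Set.univ with hSdef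
  set A := {r : V → ℝ | isCandAt G Δ r i v} with hAdef
  have hAeq : A = Set.pi Set.univ S := by
    ext r
    rw [hAdef, Set.mem_setOf_eq, candAt_iff G hΔ0 h1i h2i]
    constructor
    · rintro ⟨hrv, hnb⟩ w _
      rw [hSdef]
      by_cases hwv : w = v
      · subst hwv; simpa using hrv
      · by_cases hwN : w ∈ N
        · simp only [hwv, if_false, hwN, if_true]
          exact hnb w (by rwa [hNdef, SimpleGraph.mem_neighborFinset] at hwN)
        · simp [hwv, hwN]
    · intro h
      refine ⟨?_, ?_⟩
      · have := h v (Set.mem_univ v)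
        simpa [hSdef] using this
      · intro u hu
        have huN : u ∈ N := by rwa [hNdef, SimpleGraph.mem_neighborFinset]
        have hune : u ≠ v := by
          intro he; rw [he] at hu; exact G.irrefl hu
        have := h u (Set.mem_univ u)
        simpa [hSdef, hune, huN] using this
  set X := ENNReal.ofReal (b2 - b1) with hXdef
  set Y := ENNReal.ofReal (1 - b1) with hYdef
  have hSm : ∀ w, nuU (S w) = if w = v then X else if w ∈ N then Y else 1 := by
    intro w
    rw [hSdef]
    by_cases hwv : w = v
    · simp only [hwv, if_true]
      exact nuU_Ioc (le_of_lt hb1pos) hb21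
    · by_cases hwN : w ∈ N
      · simp only [hwv, if_false, hwN, if_true]
        exact nuU_Ioc (le_of_lt hb1pos) le_rfl
      · simp only [hwv, if_false, hwN]
        exact nuU_univ
  -- measure of A
  have hμA : μ A = X * Y ^ Δ := by
    rw [hAeq, hμpi, pi_prod_insert S (insert v N)
      (by
        intro w hw
        rw [hSdef]
        simp only [Finset.mem_insert, not_or] at hw
        simp [hw.1, hw.2])]
    have hprodN : ∏ w ∈ N, nuU (S w) = Y ^ Δ := by
      have h : ∏ w ∈ N, nuU (S w) = ∏ _w ∈ N, Y :=
        Finset.prod_congr rfl (fun w hw => by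
          rw [hSm w, if_neg (fun he => hvN (by rwa [he] at hw)), if_pos hw])
      rw [h, Finset.prod_const, hNcard]
    rw [Finset.prod_insert hvN, hprodN, hSm v, if_pos rfl]
  -- measure of A intersected with the event that u has rank in I_i
  have hμAu : ∀ u ∈ N, μ ({r : V → ℝ | b1 < r u ∧ r u ≤ b2} ∩ A)
      = X * (X * Y ^ (Δ - 1)) := by
    intro u huN
    have hune : u ≠ v := fun he => hvN (he ▸ huN)
    set S' : V → Set ℝ := fun w => if w = u then Set.Ioc b1 b2 else S w with hS'def
    have hinter : {r : V → ℝ | b1 < r u ∧ r u ≤ b2} ∩ A = Set.pi Set.univ S' := by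
      rw [hAeq]
      ext r
      simp only [Set.mem_inter_iff, Set.mem_setOf_eq, Set.mem_pi, Set.mem_univ,
        forall_true_left, hS'def]
      constructor
      · rintro ⟨hru, hA⟩ w
        by_cases hwu : w = u
        · subst hwu; simp [hru.1, hru.2]
        · simp only [hwu, if_false]; exact hA w
      · intro h
        have hu := h u
        simp only [if_pos rfl, Set.mem_Ioc] at hu
        refine ⟨hu, fun w => ?_⟩
        by_cases hwu : w = u
        · subst hwu
          rw [hSdef]
          simp only [hune, if_false, huN, if_true]
          exact ⟨hu.1, hu.2.trans hb21⟩
        · have := h w; rwa [if_neg hwu] at this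
    rw [hinter, hμpi, pi_prod_insert S' (insert v N)
      (by
        intro w hw
        simp only [Finset.mem_insert, not_or] at hw
        have hwu : w ≠ u := fun he => hw.2 (by rwa [← he] at huN)
        show (if w = u then Set.Ioc b1 b2 else S w) = Set.univ
        rw [if_neg hwu, hSdef]
        simp [hw.1, hw.2])]
    have hS'v : nuU (S' v) = X := by
      show nuU (if v = u then Set.Ioc b1 b2 else S v) = X
      rw [if_neg (Ne.symm hune), hSm v, if_pos rfl]
    have hS'u : nuU (S' u) = X := by
      show nuU (if u = u then Set.Ioc b1 b2 else S u) = X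
      rw [if_pos rfl]
      exact nuU_Ioc (le_of_lt hb1pos) hb21
    have hprodE : ∏ w ∈ N.erase u, nuU (S' w) = Y ^ (Δ - 1) := by
      have h : ∏ w ∈ N.erase u, nuU (S' w) = ∏ _w ∈ N.erase u, Y :=
        Finset.prod_congr rfl (fun w hw => by
          have hwu : w ≠ u := Finset.ne_of_mem_erase hw
          have hwN : w ∈ N := Finset.mem_of_mem_erase hw
          have hwv : w ≠ v := fun he => hvN (he ▸ hwN)
          show nuU (if w = u then Set.Ioc b1 b2 else S w) = Y
          rw [if_neg hwu, hSm w, if_neg hwv, if_pos hwN])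
      rw [h, Finset.prod_const, Finset.card_erase_of_mem huN, hNcard]
    rw [Finset.prod_insert hvN, hS'v, ← Finset.mul_prod_erase N _ huN, hS'u, hprodE]
  -- rewrite the integrand as a sum of indicators
  have hEm : ∀ u : V, MeasurableSet {r : V → ℝ | b1 < r u ∧ r u ≤ b2} := by
    intro u
    have : {r : V → ℝ | b1 < r u ∧ r u ≤ b2} = (fun r : V → ℝ => r u) ⁻¹' Set.Ioc b1 b2 := rfl
    rw [this]
    exact (measurable_pi_apply u) measurableSet_Ioc
  have hint : ∫⁻ r in A, ((N.filter fun u => b1 < r u ∧ r u ≤ b2).card : ℝ≥0∞) ∂μ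
      = ∑ u ∈ N, μ ({r : V → ℝ | b1 < r u ∧ r u ≤ b2} ∩ A) := by
    have hfun : ∀ r : V → ℝ, ((N.filter fun u => b1 < r u ∧ r u ≤ b2).card : ℝ≥0∞)
        = ∑ u ∈ N, Set.indicator {r : V → ℝ | b1 < r u ∧ r u ≤ b2} (fun _ => 1) r := by
      intro r
      rw [Finset.card_filter]
      push_cast
      refine Finset.sum_congr rfl fun u _ => ?_
      rw [Set.indicator_apply]
      by_cases h : b1 < r u ∧ r u ≤ b2
      · simp [h, Set.mem_setOf_eq]
      · simp [h, Set.mem_setOf_eq]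
    simp_rw [hfun]
    rw [lintegral_finset_sum _ (fun u _ =>
      (measurable_const.indicator (hEm u)))]
    refine Finset.sum_congr rfl fun u _ => ?_
    rw [lintegral_indicator (hEm u), setLIntegral_one, Measure.restrict_apply (hEm u)]
  calc ∫⁻ r in A, ((N.filter fun u => b1 < r u ∧ r u ≤ b2).card : ℝ≥0∞) ∂μ
      = ∑ u ∈ N, μ ({r : V → ℝ | b1 < r u ∧ r u ≤ b2} ∩ A) := hint
    _ = (Δ : ℝ≥0∞) * (X * (X * Y ^ (Δ - 1))) := by
        rw [Finset.sum_congr rfl hμAu, Finset.sum_const, hNcard, nsmul_eq_mul]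
    _ ≤ ENNReal.ofReal (2 * a) * (X * Y ^ Δ) := by
        have hY : Y ^ Δ = Y * Y ^ (Δ - 1) := by
          conv_lhs => rw [show Δ = (Δ - 1) + 1 by omega]
          rw [pow_succ]
          ring
        rw [hY]
        have hmain : (Δ : ℝ≥0∞) * X ≤ ENNReal.ofReal (2 * a) * Y := by
          rw [hXdef, hYdef, ← ENNReal.ofReal_natCast, ← ENNReal.ofReal_mul (by positivity),
            ← ENNReal.ofReal_mul (by linarith)]
          apply ENNReal.ofReal_le_ofReal
          have hΔb2 : (Δ:ℝ) * b2 = a := by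
            rw [hb2a]; field_simp
          nlinarith
        calc (Δ : ℝ≥0∞) * (X * (X * Y ^ (Δ - 1)))
            = ((Δ : ℝ≥0∞) * X) * (X * Y ^ (Δ - 1)) := by ring
          _ ≤ (ENNReal.ofReal (2 * a) * Y) * (X * Y ^ (Δ - 1)) :=
              mul_le_mul_left hmain _
          _ = ENNReal.ofReal (2 * a) * (X * (Y * Y ^ (Δ - 1))) := by ring
    _ = ENNReal.ofReal (2 * a) * μ A := by rw [hμA]
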